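/- arXiv:2403.16012 — 3 statements merged into one kernel-verified Lean document; each statement's English description precedes it below -/
import Mathlib

section
/- Let F be a totally real number field of degree r over ℚ, with real embeddings σ₁, …, σ_r : F → ℝ. Let z₁, …, z_r be complex numbers with Im(z_j) > 0 for every j. Then the family indexed by v ∈ 𝓞_F of terms exp(π i · Σ_{j=1}^r σ_j(v)² · z_j) is summable (so the theta series θ_F(z) = Σ_{v ∈ 𝓞_F} exp(π i Σ_j σ_j(v)² z_j) converges absolutely). -/
open Complex NumberField

lemma aux_summable_int_exp {a : ℝ} (ha : 0 < a) :
    Summable (fun n : ℤ => Real.exp (-a * (n : ℝ) ^ 2)) := by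
  have hr0 : 0 ≤ Real.exp (-a) := (Real.exp_pos _).le
  have hr1 : Real.exp (-a) < 1 := Real.exp_lt_one_iff.mpr (by linarith)
  have hgeo : Summable (fun k : ℕ => Real.exp (-a) ^ k) :=
    summable_geometric_of_lt_one hr0 hr1
  have hle : ∀ n : ℤ, Real.exp (-a * (n : ℝ) ^ 2) ≤ Real.exp (-a) ^ n.natAbs := by
    intro n
    rw [← Real.exp_nat_mul]
    apply Real.exp_le_exp.mpr
    have h2 : (n.natAbs : ℝ) ≤ (n.natAbs : ℝ) ^ 2 := by
      exact_mod_cast Nat.le_self_pow two_ne_zero n.natAbs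
    have h3 : (n.natAbs : ℝ) = |(n : ℝ)| := by simp [Nat.cast_natAbs]
    have h1 : (n.natAbs : ℝ) ≤ (n : ℝ) ^ 2 := by
      rw [h3] at h2 ⊢
      calc |(n:ℝ)| ≤ |(n:ℝ)| ^ 2 := h2
        _ = (n:ℝ) ^ 2 := sq_abs _
    nlinarith [mul_le_mul_of_nonneg_left h1 ha.le]
  have hsum : Summable (fun n : ℤ => Real.exp (-a) ^ n.natAbs) := by
    apply Summable.of_nat_of_neg
    · simpa using hgeo
    · simpa using hgeo
  exact hsum.of_nonneg_of_le (fun n => (Real.exp_pos _).le) hle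

lemma aux_summable_fin_prod {f : ℤ → ℝ} (hf : Summable f) (h0 : ∀ n, 0 ≤ f n) (k : ℕ) :
    Summable (fun n : Fin k → ℤ => ∏ i, f (n i)) := by
  induction k with
  | zero => exact Summable.of_finite
  | succ k ih =>
    have h2 : Summable (fun p : ℤ × (Fin k → ℤ) => f p.1 * ∏ i, f (p.2 i)) :=
      Summable.mul_of_nonneg (f := f) (g := fun n : Fin k → ℤ => ∏ i, f (n i)) hf ih
        (fun n => h0 n) (fun n => Finset.prod_nonneg fun i _ => h0 _)
    let e := Fin.consEquiv (fun _ : Fin (k + 1) => ℤ)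
    have key : ((fun n : Fin (k + 1) → ℤ => ∏ i, f (n i)) ∘ e) =
        fun p : ℤ × (Fin k → ℤ) => f p.1 * ∏ i, f (p.2 i) := by
      funext p
      simp only [e, Function.comp_apply, Fin.consEquiv_apply, Fin.prod_univ_succ,
        Fin.cons_zero, Fin.cons_succ]
    rw [← e.summable_iff, key]
    exact h2

lemma aux_summable_pi_exp {ι : Type*} [Fintype ι] {a : ℝ} (ha : 0 < a) :
    Summable (fun n : ι → ℤ => Real.exp (-a * ∑ i, (n i : ℝ) ^ 2)) := by
  have hf : Summable (fun n : ℤ => Real.exp (-a * (n : ℝ) ^ 2)) := aux_summable_int_exp ha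
  have h0 : ∀ n : ℤ, 0 ≤ Real.exp (-a * (n : ℝ) ^ 2) := fun n => (Real.exp_pos _).le
  have h2 := aux_summable_fin_prod hf h0 (Fintype.card ι)
  set q := Fintype.equivFin ι with hq
  let e : (ι → ℤ) ≃ (Fin (Fintype.card ι) → ℤ) := q.arrowCongr (Equiv.refl ℤ)
  have key : (fun n : ι → ℤ => Real.exp (-a * ∑ i, (n i : ℝ) ^ 2)) =
      (fun m : Fin (Fintype.card ι) → ℤ => ∏ j, Real.exp (-a * (m j : ℝ) ^ 2)) ∘ e := by
    funext n
    rw [Function.comp_apply, ← Real.exp_sum]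
    congr 1
    rw [Finset.mul_sum]
    exact (Equiv.sum_comp q.symm fun i => -a * (n i : ℝ) ^ 2).symm
  rw [key]
  exact e.summable_iff.mpr h2

/-- For a totally real number field `F` of degree `r` with real embeddings
`σ₁, …, σ_r`, and complex numbers `z₁, …, z_r` in the upper half-plane, the
family of terms `exp(π i Σ_j σ_j(v)² z_j)`, indexed by `v ∈ 𝓞 F`, is summable;
i.e. the theta series `θ_F(z)` converges absolutely. -/
theorem theta_series_summable
    (F : Type*) [Field F] [NumberField F] (r : ℕ)
    (σ : Fin r → (F →+* ℝ))
    (hσ : Function.Bijective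
      (fun i : Fin r => (Complex.ofRealHom.comp (σ i) : F →+* ℂ)))
    (z : Fin r → ℂ) (hz : ∀ j, 0 < (z j).im) :
    Summable (fun v : 𝓞 F =>
      Complex.exp ((Real.pi : ℂ) * Complex.I *
        ∑ j, ((σ j (v : F) : ℂ)) ^ 2 * z j)) := by
  classical
  -- r > 0
  have hcard : Fintype.card (Fin r) = Fintype.card (F →+* ℂ) := Fintype.card_of_bijective hσ
  have hrpos : 0 < r := by
    have := NumberField.Embeddings.card F ℂ
    rw [Fintype.card_fin] at hcard
    rw [hcard, this]
    exact Module.finrank_pos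
  have hne : (Finset.univ : Finset (Fin r)).Nonempty := ⟨⟨0, hrpos⟩, Finset.mem_univ _⟩
  set m := Finset.univ.inf' hne (fun j => (z j).im) with hmdef
  have hm : 0 < m := (Finset.lt_inf'_iff hne).mpr fun j _ => hz j
  have hmle : ∀ j, m ≤ (z j).im := fun j => Finset.inf'_le _ (Finset.mem_univ j)
  -- trace via embeddings
  have htr : ∀ x : F, ((Algebra.trace ℚ F x : ℚ) : ℝ) = ∑ j, σ j x := by
    intro x
    have h1 := trace_eq_sum_embeddings (K := ℚ) (L := F) ℂ (x := x)
    have hbij : Function.Bijective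
        (fun j : Fin r => RingHom.equivRatAlgHom F ℂ (ofRealHom.comp (σ j))) :=
      (RingHom.equivRatAlgHom F ℂ).bijective.comp hσ
    have h2 : ∑ j, ((σ j x : ℝ) : ℂ) = ∑ ψ : F →ₐ[ℚ] ℂ, ψ x :=
      Fintype.sum_bijective _ hbij _ _ (fun j => rfl)
    apply Complex.ofReal_injective
    push_cast
    rw [← eq_ratCast (algebraMap ℚ ℂ), h1, ← h2]
  -- dual basis and coefficients
  set b := NumberField.RingOfIntegers.basis F with hbdef
  have hD : (Algebra.traceForm ℚ F).Nondegenerate := traceForm_nondegenerate ℚ F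
  set D := (Algebra.traceForm ℚ F).dualBasis hD (integralBasis F) with hDdef
  have hrepr : ∀ (v : 𝓞 F) (i : Module.Free.ChooseBasisIndex ℤ (𝓞 F)),
      ((b.repr v i : ℤ) : ℝ) = ∑ j, σ j (v : F) * σ j (D i) := by
    intro v i
    have e1 : ((b.repr v i : ℤ) : ℚ) = (integralBasis F).repr (v : F) i := by
      rw [RingOfIntegers.coe_eq_algebraMap, integralBasis_repr_apply]
      simp [eq_intCast, hbdef]
    have e2 : (integralBasis F).repr (v : F) i = Algebra.trace ℚ F ((v : F) * D i) := by
      conv_lhs => rw [← LinearMap.BilinForm.dualBasis_dualBasis hD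
        (Algebra.traceForm_isSymm ℚ (S := F)) (integralBasis F)]
      rw [LinearMap.BilinForm.dualBasis_repr_apply, ← hDdef, Algebra.traceForm_apply]
    have e12 := e1.trans e2
    have e4 : (((b.repr v i : ℤ) : ℚ) : ℝ) =
        ((Algebra.trace ℚ F ((v : F) * D i) : ℚ) : ℝ) := congrArg (fun q : ℚ => (q : ℝ)) e12
    rw [show ((b.repr v i : ℤ) : ℝ) = (((b.repr v i : ℤ) : ℚ) : ℝ) by push_cast; ring,
      e4, htr]
    simp [map_mul]
  set S : 𝓞 F → ℝ := fun v => ∑ j, (σ j (v : F)) ^ 2 with hSdef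
  have hS0 : ∀ v, 0 ≤ S v := fun v => Finset.sum_nonneg fun j _ => sq_nonneg _
  set c : ℝ := ∑ i : Module.Free.ChooseBasisIndex ℤ (𝓞 F), ∑ j, (σ j (D i)) ^ 2 with hcdef
  have hc0 : 0 ≤ c := Finset.sum_nonneg fun i _ => Finset.sum_nonneg fun j _ => sq_nonneg _
  set N : 𝓞 F → ℝ := fun v => ∑ i, ((b.repr v i : ℤ) : ℝ) ^ 2 with hNdef
  have hNS : ∀ v, N v ≤ S v * (c + 1) := by
    intro v
    have h1 : ∀ i, ((b.repr v i : ℤ) : ℝ) ^ 2 ≤ S v * ∑ j, (σ j (D i)) ^ 2 := by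
      intro i
      rw [hrepr v i]
      exact Finset.sum_mul_sq_le_sq_mul_sq Finset.univ _ _
    calc N v ≤ ∑ i, S v * ∑ j, (σ j (D i)) ^ 2 := Finset.sum_le_sum fun i _ => h1 i
      _ = S v * c := by rw [← Finset.mul_sum]
      _ ≤ S v * (c + 1) := by nlinarith [hS0 v]
  set a : ℝ := Real.pi * m / (c + 1) with hadef
  have ha : 0 < a := div_pos (mul_pos Real.pi_pos hm) (by linarith)
  have hbound : ∀ v : 𝓞 F, ‖Complex.exp ((Real.pi : ℂ) * Complex.I *
      ∑ j, ((σ j (v : F) : ℂ)) ^ 2 * z j)‖ ≤ Real.exp (-a * N v) := by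
    intro v
    rw [Complex.norm_exp]
    apply Real.exp_le_exp.mpr
    have hre : ((Real.pi : ℂ) * Complex.I * ∑ j, ((σ j (v : F) : ℂ)) ^ 2 * z j).re
        = -Real.pi * ∑ j, (σ j (v : F)) ^ 2 * (z j).im := by
      simp only [Complex.mul_re, Complex.mul_im, Complex.I_re, Complex.I_im,
        Complex.ofReal_re, Complex.ofReal_im, Complex.im_sum, Complex.re_sum,
        ← Complex.ofReal_pow]
      simp only [Complex.ofReal_re, Complex.ofReal_im, Finset.mul_sum]
      simp only [mul_zero, zero_mul, mul_one, sub_zero, add_zero, Finset.sum_const_zero,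
        zero_sub]
      rw [← Finset.sum_neg_distrib]
      exact Finset.sum_congr rfl fun j _ => by ring
    rw [hre]
    have h2 : m * S v ≤ ∑ j, (σ j (v : F)) ^ 2 * (z j).im := by
      rw [hSdef]
      simp only [Finset.mul_sum]
      exact Finset.sum_le_sum fun j _ => by
        rw [mul_comm]; exact mul_le_mul_of_nonneg_left (hmle j) (sq_nonneg _)
    have h3 : a * N v ≤ Real.pi * m * S v := by
      have h6 := hNS v
      have h4 : a * N v ≤ a * (S v * (c + 1)) := mul_le_mul_of_nonneg_left h6 ha.le
      have h5 : a * (S v * (c + 1)) = Real.pi * m * S v := by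
        rw [hadef]
        field_simp
      linarith
    have h7 : Real.pi * (m * S v) ≤ Real.pi * ∑ j, (σ j (v : F)) ^ 2 * (z j).im :=
      mul_le_mul_of_nonneg_left h2 Real.pi_pos.le
    nlinarith [h3, h7]
  have hg : Summable (fun v : 𝓞 F => Real.exp (-a * N v)) := by
    have hinj : Function.Injective (fun v : 𝓞 F => (fun i => b.repr v i)) := by
      intro v w h
      apply b.repr.injective
      ext i
      exact congrFun h i
    exact (aux_summable_pi_exp (ι := Module.Free.ChooseBasisIndex ℤ (𝓞 F)) ha).comp_injective hinj
  exact Summable.of_norm_bounded hg hbound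
end

section
/- Let F be a totally real number field of degree r over ℚ, with real embeddings σ₁, …, σ_r : F → ℝ. The theta function θ_F, sending a tuple z = (z₁,…,z_r) ∈ ℂ^r to Σ_{v ∈ 𝓞_F} exp(π i Σ_{j=1}^r σ_j(v)² z_j), is holomorphic (complex differentiable) on the open set { z ∈ ℂ^r : Im(z_j) > 0 for all j }. -/
open Complex NumberField

lemma aux_int_summable {c : ℝ} (hc : 0 < c) :
    Summable fun n : ℤ => Real.exp (-c * (n : ℝ) ^ 2) := by
  have key : Summable fun n : ℕ => Real.exp (-c * (n : ℝ) ^ 2) := by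
    refine Summable.of_nonneg_of_le (fun n => (Real.exp_pos _).le) (fun n => ?_)
      (summable_geometric_of_lt_one (Real.exp_pos (-c)).le
        (Real.exp_lt_one_iff.mpr (neg_neg_of_pos hc)))
    rw [← Real.exp_nat_mul]
    apply Real.exp_le_exp.2
    have h1 : (n : ℝ) ≤ (n : ℝ) ^ 2 := by
      exact_mod_cast Nat.le_self_pow two_ne_zero n
    nlinarith
  have keyneg : Summable fun n : ℕ => Real.exp (-c * ((-((n : ℤ) + 1) : ℤ) : ℝ) ^ 2) := by
    refine (key.comp_injective Nat.succ_injective).congr fun n => ?_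
    simp only [Function.comp_apply]
    congr 1
    push_cast
    ring
  refine Summable.of_nat_of_neg_add_one ?_ keyneg
  simpa using key

lemma aux_pi_summable {g : ℤ → ℝ} (hg0 : ∀ n, 0 ≤ g n) (hg : Summable g) (k : ℕ) :
    Summable fun x : Fin k → ℤ => ∏ j, g (x j) := by
  induction k with
  | zero => exact Summable.of_finite
  | succ k ih =>
    have h2 : Summable fun p : ℤ × (Fin k → ℤ) => g p.1 * ∏ j, g (p.2 j) :=
      Summable.mul_of_nonneg (f := g) (g := fun x : Fin k → ℤ => ∏ j, g (x j)) hg ih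
        (fun n => hg0 n) (fun x => Finset.prod_nonneg fun j _ => hg0 (x j))
    have h3 : Summable ((fun x : Fin (k + 1) → ℤ => ∏ j, g (x j)) ∘ (Fin.consEquiv fun _ => ℤ)) := by
      refine h2.congr fun p => ?_
      simp [Function.comp_def, Fin.prod_univ_succ, Fin.consEquiv]
    exact (Equiv.summable_iff (Fin.consEquiv fun _ => ℤ)).mp h3

lemma aux_exists_one_le {F : Type*} [Field F] [NumberField F] {r : ℕ}
    (σ : Fin r → (F →+* ℝ))
    (hσ : Function.Bijective
      (fun i : Fin r => (Complex.ofRealHom.comp (σ i) : F →+* ℂ)))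
    (v : 𝓞 F) (hv : v ≠ 0) : ∃ j, 1 ≤ |σ j (v : F)| := by
  have hr : 0 < r := by
    have hcard : Fintype.card (Fin r) = Fintype.card (F →+* ℂ) :=
      Fintype.card_of_bijective hσ
    have h2 : 0 < Fintype.card (F →+* ℂ) := by
      rw [NumberField.Embeddings.card F ℂ]
      exact Module.finrank_pos
    rw [← hcard, Fintype.card_fin] at h2
    exact h2
  have hv' : (v : F) ≠ 0 := by
    simpa using hv
  have hnorm : (1 : ℝ) ≤ |Algebra.norm ℚ (v : F)| := by
    rw [← Algebra.coe_norm_int, ← Int.cast_one, ← Int.cast_abs, Rat.cast_intCast, Int.cast_le]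
    exact Int.one_le_abs (Algebra.norm_ne_zero_iff.mpr hv)
  have hprod : ∏ j, |σ j (v : F)| = |Algebra.norm ℚ (v : F)| := by
    have h := congr_arg (‖·‖)
      (Algebra.norm_eq_prod_embeddings ℚ (E := ℂ) ((v : F)))
    rw [norm_prod] at h
    have hL : ‖(algebraMap ℚ ℂ (Algebra.norm ℚ (v : F)))‖
        = |Algebra.norm ℚ (v : F)| := by
      rw [eq_ratCast, ← Complex.ofReal_ratCast, Complex.norm_real, Real.norm_eq_abs, ← Rat.cast_abs]
    have hR : ∏ φ : F →ₐ[ℚ] ℂ, ‖(φ (v : F))‖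
        = ∏ j, |σ j (v : F)| := by
      rw [← Fintype.prod_equiv (RingHom.equivRatAlgHom F ℂ)
        (fun ψ : F →+* ℂ => ‖(ψ (v : F))‖)
        (fun φ : F →ₐ[ℚ] ℂ => ‖(φ (v : F))‖)
        (fun ψ => by simp [RingHom.equivRatAlgHom_apply])]
      rw [← Fintype.prod_bijective _ hσ
        (fun i => ‖((Complex.ofRealHom.comp (σ i) : F →+* ℂ) (v : F))‖)
        (fun ψ : F →+* ℂ => ‖(ψ (v : F))‖) (fun i => rfl)]
      simp [Complex.norm_real]
    rw [hL, hR] at h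
    exact h.symm
  by_contra hcon
  push_neg at hcon
  have : ∏ j, |σ j (v : F)| < 1 := by
    have := Finset.prod_lt_prod_of_nonempty
      (f := fun j : Fin r => |σ j (v : F)|) (g := fun _ => (1 : ℝ))
      (fun j _ => abs_pos.mpr (fun h => hv' ((σ j).injective (by simpa using h))))
      (fun j _ => hcon j)
      (@Finset.univ_nonempty (Fin r) _ ⟨⟨0, hr⟩⟩)
    simpa using this
  rw [hprod] at this
  linarith

lemma aux_floor_inj {F : Type*} [Field F] [NumberField F] {r : ℕ}
    (σ : Fin r → (F →+* ℝ))
    (hσ : Function.Bijective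
      (fun i : Fin r => (Complex.ofRealHom.comp (σ i) : F →+* ℂ))) :
    Function.Injective (fun (v : 𝓞 F) (j : Fin r) => ⌊2 * σ j (v : F)⌋) := by
  intro v w h
  by_contra hvw
  obtain ⟨j, hj⟩ := aux_exists_one_le σ hσ (v - w) (sub_ne_zero.mpr hvw)
  have h1 : ⌊2 * σ j (v : F)⌋ = ⌊2 * σ j (w : F)⌋ := congrFun h j
  have h2 : |2 * σ j (v : F) - 2 * σ j (w : F)| < 1 := Int.abs_sub_lt_one_of_floor_eq_floor h1
  have h3 : σ j ((v - w : 𝓞 F) : F) = σ j (v : F) - σ j (w : F) := by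
    push_cast
    exact map_sub _ _ _
  rw [h3] at hj
  rw [abs_sub_lt_iff] at h2
  rw [le_abs] at hj
  rcases hj with hj | hj <;> linarith

lemma aux_summable {F : Type*} [Field F] [NumberField F] {r : ℕ}
    (σ : Fin r → (F →+* ℝ))
    (hσ : Function.Bijective
      (fun i : Fin r => (Complex.ofRealHom.comp (σ i) : F →+* ℂ)))
    {c : ℝ} (hc : 0 < c) :
    Summable fun v : 𝓞 F => Real.exp (-c * ∑ j, (σ j (v : F)) ^ 2) := by
  have hinj := aux_floor_inj σ hσ
  have hg : Summable fun n : ℤ => Real.exp (-(c / 8) * (n : ℝ) ^ 2) :=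
    aux_int_summable (by linarith)
  have hpi : Summable fun x : Fin r → ℤ => ∏ j, Real.exp (-(c / 8) * ((x j : ℝ)) ^ 2) :=
    aux_pi_summable (fun n => (Real.exp_pos _).le) hg r
  have hcomp := (hpi.mul_left (Real.exp (c * r / 4))).comp_injective hinj
  refine Summable.of_nonneg_of_le (fun v => (Real.exp_pos _).le) (fun v => ?_) hcomp
  simp only [Function.comp_apply]
  have key : ∀ j : Fin r, ((⌊2 * σ j (v : F)⌋ : ℝ)) ^ 2 / 8 - 1 / 4 ≤ (σ j (v : F)) ^ 2 := by
    intro j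
    set x : ℝ := σ j (v : F) with hx
    have h1 : ((⌊2 * x⌋ : ℝ)) ≤ 2 * x := Int.floor_le _
    have h2 : 2 * x < (⌊2 * x⌋ : ℝ) + 1 := Int.lt_floor_add_one _
    set n : ℝ := ((⌊2 * x⌋ : ℤ) : ℝ) with hn
    have habs : |n| ≤ |2 * x| + 1 := by
      rcases le_or_gt 0 n with h | h
      · rw [_root_.abs_of_nonneg h]
        linarith [le_abs_self (2 * x)]
      · rw [_root_.abs_of_neg h]
        linarith [neg_abs_le (2 * x)]
    nlinarith [_root_.sq_abs (2 * x), _root_.sq_abs n, sq_nonneg (|2 * x| - 1), abs_nonneg n,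
      abs_nonneg (2 * x), habs]
  have hsumle : ∑ j, (((⌊2 * σ j (v : F)⌋ : ℝ)) ^ 2 / 8 - 1 / 4) ≤ ∑ j, (σ j (v : F)) ^ 2 :=
    Finset.sum_le_sum fun j _ => key j
  have step1 : Real.exp (-c * ∑ j, (σ j (v : F)) ^ 2)
      ≤ Real.exp (-c * ∑ j, (((⌊2 * σ j (v : F)⌋ : ℝ)) ^ 2 / 8 - 1 / 4)) := by
    apply Real.exp_le_exp.2
    have := mul_le_mul_of_nonneg_left hsumle hc.le
    linarith
  refine step1.trans (le_of_eq ?_)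
  have hsplit : ∑ j, (((⌊2 * σ j (v : F)⌋ : ℝ)) ^ 2 / 8 - 1 / 4)
      = (∑ j, ((⌊2 * σ j (v : F)⌋ : ℝ)) ^ 2) / 8 - r / 4 := by
    rw [Finset.sum_sub_distrib, ← Finset.sum_div]
    simp [Finset.card_univ]
    ring
  rw [hsplit]
  have : -c * ((∑ j, ((⌊2 * σ j (v : F)⌋ : ℝ)) ^ 2) / 8 - r / 4)
      = c * r / 4 + ∑ j, (-(c / 8) * ((⌊2 * σ j (v : F)⌋ : ℝ)) ^ 2) := by
    rw [← Finset.mul_sum]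
    ring
  rw [this, Real.exp_add, Real.exp_sum]

/-- The theta function of a totally real number field `F` of degree `r`,
`θ_F(z) = Σ_{v ∈ 𝓞 F} exp(π i Σ_j σ_j(v)² z_j)`, is holomorphic (complex
Fréchet differentiable) on the open set of tuples `z ∈ ℂʳ` with all
coordinates in the upper half-plane. -/
theorem theta_series_holomorphic
    (F : Type*) [Field F] [NumberField F] (r : ℕ)
    (σ : Fin r → (F →+* ℝ))
    (hσ : Function.Bijective
      (fun i : Fin r => (Complex.ofRealHom.comp (σ i) : F →+* ℂ))) :
    DifferentiableOn ℂ
      (fun z : Fin r → ℂ =>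
        ∑' v : 𝓞 F, Complex.exp ((Real.pi : ℂ) * Complex.I *
          ∑ j, ((σ j (v : F) : ℂ)) ^ 2 * z j))
      {z : Fin r → ℂ | ∀ j, 0 < (z j).im} := by
  classical
  have hπ := Real.pi_pos
  have hr : 0 < r := by
    have hcard : Fintype.card (Fin r) = Fintype.card (F →+* ℂ) :=
      Fintype.card_of_bijective hσ
    have h2 : 0 < Fintype.card (F →+* ℂ) := by
      rw [NumberField.Embeddings.card F ℂ]
      exact Module.finrank_pos
    rw [← hcard, Fintype.card_fin] at h2
    exact h2
  haveI : Nonempty (Fin r) := ⟨⟨0, hr⟩⟩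
  set term : 𝓞 F → (Fin r → ℂ) → ℂ := fun v z =>
    Complex.exp ((Real.pi : ℂ) * Complex.I *
      ∑ j, ((σ j (v : F) : ℂ)) ^ 2 * z j) with hterm
  set U : Set (Fin r → ℂ) := {z : Fin r → ℂ | ∀ j, 0 < (z j).im} with hUdef
  have hU : IsOpen U := by
    have : U = ⋂ j, (fun z : Fin r → ℂ => (z j).im) ⁻¹' Set.Ioi 0 := by
      ext z
      simp [hUdef, Set.mem_iInter]
    rw [this]
    exact isOpen_iInter_of_finite fun j =>
      isOpen_Ioi.preimage (Complex.continuous_im.comp (continuous_apply j))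
  set l : 𝓞 F → (Fin r → ℂ) →L[ℂ] ℂ := fun v =>
    ((Real.pi : ℂ) * Complex.I) •
      (∑ j, ((σ j (v : F) : ℂ)) ^ 2 • ContinuousLinearMap.proj j) with hl
  have haply : ∀ v z, l v z = (Real.pi : ℂ) * Complex.I *
      ∑ j, ((σ j (v : F) : ℂ)) ^ 2 * z j := by
    intro v z
    simp [hl, ContinuousLinearMap.sum_apply, ContinuousLinearMap.smul_apply,
      ContinuousLinearMap.proj_apply, smul_eq_mul]
  have hnorm : ∀ v z, ‖term v z‖
      = Real.exp (-Real.pi * ∑ j, (σ j (v : F)) ^ 2 * (z j).im) := by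
    intro v z
    rw [hterm]
    rw [Complex.norm_exp]
    congr 1
    rw [mul_assoc, Complex.re_ofReal_mul, Complex.I_mul_re, Complex.im_sum]
    simp only [← Complex.ofReal_pow, Complex.im_ofReal_mul]
    ring
  have hbound : ∀ (δ : ℝ), 0 < δ → ∀ v, ∀ z : Fin r → ℂ, (∀ j, δ ≤ (z j).im) →
      ‖term v z‖ ≤ Real.exp (-(Real.pi * δ) * ∑ j, (σ j (v : F)) ^ 2) := by
    intro δ hδ v z hz
    rw [hnorm v z]
    apply Real.exp_le_exp.2
    have hsle : δ * ∑ j, (σ j (v : F)) ^ 2 ≤ ∑ j, (σ j (v : F)) ^ 2 * (z j).im := by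
      rw [Finset.mul_sum]
      refine Finset.sum_le_sum fun j _ => ?_
      calc δ * (σ j (v : F)) ^ 2 = (σ j (v : F)) ^ 2 * δ := mul_comm _ _
        _ ≤ (σ j (v : F)) ^ 2 * (z j).im :=
          mul_le_mul_of_nonneg_left (hz j) (sq_nonneg _)
    nlinarith [mul_le_mul_of_nonneg_left hsle hπ.le]
  have hproj : ∀ j : Fin r,
      ‖(ContinuousLinearMap.proj j : (Fin r → ℂ) →L[ℂ] ℂ)‖ ≤ 1 :=
    fun j => ContinuousLinearMap.opNorm_le_bound _ zero_le_one
      fun x => by simpa using norm_le_pi_norm x j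
  have hlnorm : ∀ v, ‖l v‖ ≤ Real.pi * ∑ j, (σ j (v : F)) ^ 2 := by
    intro v
    have hQ0 : (0 : ℝ) ≤ ∑ j, (σ j (v : F)) ^ 2 :=
      Finset.sum_nonneg fun j _ => sq_nonneg _
    refine ContinuousLinearMap.opNorm_le_bound _ (by positivity) fun z => ?_
    rw [haply v z]
    have h1 : ‖(Real.pi : ℂ) * Complex.I‖ = Real.pi := by
      simp [norm_mul, Complex.norm_I, Complex.norm_real, Real.norm_eq_abs,
        _root_.abs_of_nonneg hπ.le]
    have h2 : ‖∑ j, ((σ j (v : F) : ℂ)) ^ 2 * z j‖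
        ≤ (∑ j, (σ j (v : F)) ^ 2) * ‖z‖ := by
      refine (norm_sum_le _ _).trans ?_
      rw [Finset.sum_mul]
      refine Finset.sum_le_sum fun j _ => ?_
      rw [norm_mul]
      have h3 : ‖((σ j (v : F) : ℂ)) ^ 2‖ = (σ j (v : F)) ^ 2 := by
        rw [norm_pow]
        simp [Complex.norm_real, Real.norm_eq_abs, _root_.sq_abs]
      rw [h3]
      exact mul_le_mul_of_nonneg_left (norm_le_pi_norm z j) (sq_nonneg _)
    calc ‖(Real.pi : ℂ) * Complex.I * ∑ j, ((σ j (v : F) : ℂ)) ^ 2 * z j‖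
        = Real.pi * ‖∑ j, ((σ j (v : F) : ℂ)) ^ 2 * z j‖ := by rw [norm_mul, h1]
      _ ≤ Real.pi * ((∑ j, (σ j (v : F)) ^ 2) * ‖z‖) :=
          mul_le_mul_of_nonneg_left h2 hπ.le
      _ = (Real.pi * ∑ j, (σ j (v : F)) ^ 2) * ‖z‖ := by ring
  have hd : ∀ v (x : Fin r → ℂ), HasFDerivAt (term v) (term v x • l v) x := by
    intro v x
    have h := ((l v).hasFDerivAt (x := x)).cexp
    have hfun : (fun z => Complex.exp (l v z)) = term v :=
      funext fun z => by rw [haply v z]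
    rw [hfun, haply v x] at h
    exact h
  intro x hx
  have main : HasFDerivAt (fun z : Fin r → ℂ => ∑' v : 𝓞 F, term v z)
      (∑' v : 𝓞 F, term v x • l v) x := by
    refine hasFDerivAt_of_tendstoLocallyUniformlyOn (l := Filter.atTop)
      (f := fun s : Finset (𝓞 F) => fun z => ∑ v ∈ s, term v z)
      (f' := fun s : Finset (𝓞 F) => fun z => ∑ v ∈ s, term v z • l v)
      (g := fun z => ∑' v : 𝓞 F, term v z)
      (g' := fun z => ∑' v : 𝓞 F, term v z • l v)
      hU ?_ ?_ ?_ hx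
    · -- locally uniform convergence of derivatives
      rw [tendstoLocallyUniformlyOn_iff_forall_isCompact hU]
      intro K hKU hK
      rcases K.eq_empty_or_nonempty with rfl | hne
      · exact tendstoUniformlyOn_empty
      have hcont : ∀ j : Fin r, ContinuousOn (fun z : Fin r → ℂ => (z j).im) K :=
        fun j => (Complex.continuous_im.comp (continuous_apply j)).continuousOn
      choose zm hzm hzle using fun j => hK.exists_isMinOn hne (hcont j)
      set δ : ℝ := Finset.univ.inf' Finset.univ_nonempty (fun j => ((zm j) j).im) with hδdef
      have hδpos : 0 < δ := by
        rw [hδdef, Finset.lt_inf'_iff]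
        intro j _
        exact hKU (hzm j) j
      have hδle : ∀ z ∈ K, ∀ j, δ ≤ (z j).im := fun z hz j =>
        le_trans (Finset.inf'_le _ (Finset.mem_univ j)) (isMinOn_iff.mp (hzle j) z hz)
      refine tendstoUniformlyOn_tsum
        (u := fun v : 𝓞 F =>
          (2 / δ) * Real.exp (-(Real.pi * δ / 2) * ∑ j, (σ j (v : F)) ^ 2))
        ((aux_summable σ hσ (by positivity)).mul_left _) ?_
      intro v z hz
      have hQ0 : (0 : ℝ) ≤ ∑ j, (σ j (v : F)) ^ 2 :=
        Finset.sum_nonneg fun j _ => sq_nonneg _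
      have h2 := hbound δ hδpos v z (hδle z hz)
      have h3 := hlnorm v
      have h4 : ‖term v z‖ * ‖l v‖
          ≤ Real.exp (-(Real.pi * δ) * ∑ j, (σ j (v : F)) ^ 2)
            * (Real.pi * ∑ j, (σ j (v : F)) ^ 2) :=
        mul_le_mul h2 h3 (norm_nonneg _) (Real.exp_pos _).le
      have h5 : Real.pi * ∑ j, (σ j (v : F)) ^ 2
          ≤ (2 / δ) * Real.exp ((Real.pi * δ / 2) * ∑ j, (σ j (v : F)) ^ 2) := by
        have ht : (Real.pi * δ / 2) * ∑ j, (σ j (v : F)) ^ 2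
            ≤ Real.exp ((Real.pi * δ / 2) * ∑ j, (σ j (v : F)) ^ 2) := by
          linarith [Real.add_one_le_exp ((Real.pi * δ / 2) * ∑ j, (σ j (v : F)) ^ 2)]
        have heq : Real.pi * ∑ j, (σ j (v : F)) ^ 2
            = (2 / δ) * ((Real.pi * δ / 2) * ∑ j, (σ j (v : F)) ^ 2) := by
          field_simp
        rw [heq]
        exact mul_le_mul_of_nonneg_left ht (by positivity)
      calc ‖term v z • l v‖ ≤ ‖term v z‖ * ‖l v‖ := ContinuousLinearMap.opNorm_smul_le _ _
        _ ≤ Real.exp (-(Real.pi * δ) * ∑ j, (σ j (v : F)) ^ 2)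
            * ((2 / δ) * Real.exp ((Real.pi * δ / 2) * ∑ j, (σ j (v : F)) ^ 2)) := by
          refine h4.trans ?_
          exact mul_le_mul_of_nonneg_left h5 (Real.exp_pos _).le
        _ = (2 / δ) * Real.exp (-(Real.pi * δ / 2) * ∑ j, (σ j (v : F)) ^ 2) := by
          rw [mul_left_comm, ← Real.exp_add]
          congr 1
          ring
    · -- each partial sum has the termwise derivative
      intro s y _
      exact HasFDerivAt.fun_sum fun v _ => hd v y
    · -- pointwise convergence
      intro y hy
      set δ : ℝ := Finset.univ.inf' Finset.univ_nonempty (fun j => (y j).im) with hδdef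
      have hδpos : 0 < δ := by
        rw [hδdef, Finset.lt_inf'_iff]
        intro j _
        exact hy j
      have hδle : ∀ j, δ ≤ (y j).im := fun j =>
        Finset.inf'_le _ (Finset.mem_univ j)
      have hsummable : Summable fun v : 𝓞 F => term v y :=
        Summable.of_norm_bounded (aux_summable σ hσ (by positivity : (0:ℝ) < Real.pi * δ))
          (fun v => hbound δ hδpos v y hδle)
      exact hsummable.hasSum
  exact main.differentiableAt.differentiableWithinAt
end

section
/- Let λ : ℕ → ℂ, let ε be a real number with 0 < ε < 1/2, and let C ≥ 1 and c > 0 be real constants such that: (i) for every squarefree natural number τ ≥ 1 and every natural number ξ ≥ 1, |λ(τ · ξ²)| ≤ C · ξ^ε · |λ(τ)|; and (ii) for all sufficiently large natural numbers N, c · N ≤ Σ_{n=1}^{N} |λ(n)|² ≤ C · N. Then there exists δ > 0 such that for every T there is a squarefree natural number τ ≥ T with |λ(τ)| ≥ δ; in other words, the limsup of |λ(τ)| over squarefree τ → ∞ is strictly positive. -/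
open Finset Filter

/-- Decomposition of a natural number as (squarefree part, square root of square part). -/
noncomputable def sqfDec (n : ℕ) : ℕ × ℕ :=
  ⟨(Nat.sq_mul_squarefree n).choose, (Nat.sq_mul_squarefree n).choose_spec.choose⟩

lemma sqfDec_spec (n : ℕ) :
    (sqfDec n).2 ^ 2 * (sqfDec n).1 = n ∧ Squarefree (sqfDec n).1 :=
  (Nat.sq_mul_squarefree n).choose_spec.choose_spec

lemma sqfDec_mul (n : ℕ) : (sqfDec n).1 * (sqfDec n).2 ^ 2 = n := by
  rw [mul_comm]; exact (sqfDec_spec n).1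

lemma sqfDec_sqfree (n : ℕ) : Squarefree (sqfDec n).1 := (sqfDec_spec n).2

/-- Non-vanishing core (paper's Theorem 1.4): if `λ : ℕ → ℂ` satisfies
(i) `|λ(τ ξ²)| ≤ C ξ^ε |λ(τ)|` for all squarefree `τ ≥ 1` and all `ξ ≥ 1`
(with `0 < ε < 1/2`), and (ii) `c·N ≤ Σ_{n ≤ N} |λ(n)|² ≤ C·N` for all large
`N`, then the values `|λ(τ)|` at squarefree `τ` stay bounded away from `0`
along a sequence of `τ → ∞`: the limsup of `|λ(τ)|` over squarefree `τ` is
strictly positive. -/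
theorem squarefree_coefficients_limsup_pos
    (lam : ℕ → ℂ) (ε : ℝ) (hε0 : 0 < ε) (hε : ε < 1 / 2)
    (C c : ℝ) (hC : 1 ≤ C) (hc : 0 < c)
    (h1 : ∀ τ : ℕ, 1 ≤ τ → Squarefree τ → ∀ ξ : ℕ, 1 ≤ ξ →
      ‖lam (τ * ξ ^ 2)‖ ≤ C * (ξ : ℝ) ^ ε * ‖lam τ‖)
    (h2 : ∀ᶠ N : ℕ in Filter.atTop,
      c * N ≤ ∑ n ∈ Finset.Icc 1 N, (‖lam n‖) ^ 2 ∧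
      ∑ n ∈ Finset.Icc 1 N, (‖lam n‖) ^ 2 ≤ C * N) :
    ∃ δ : ℝ, 0 < δ ∧ ∀ T : ℕ, ∃ τ : ℕ, T ≤ τ ∧ Squarefree τ ∧
      δ ≤ ‖lam τ‖ := by
  classical
  by_contra hcon
  push_neg at hcon
  have hC0 : (0:ℝ) < C := lt_of_lt_of_le one_pos hC
  obtain ⟨N₀, hN₀⟩ := eventually_atTop.mp h2
  set K : ℝ := max 1 (∑' n : ℕ, (n : ℝ) ^ (2 * ε - 2)) with hKdef
  have hK1 : (1:ℝ) ≤ K := le_max_left _ _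
  have hK0 : (0:ℝ) < K := lt_of_lt_of_le one_pos hK1
  have hsummable : Summable (fun n : ℕ => (n : ℝ) ^ (2 * ε - 2)) :=
    Real.summable_nat_rpow.mpr (by linarith)
  have hKsum : ∀ s : Finset ℕ, ∑ ξ ∈ s, (ξ : ℝ) ^ (2 * ε - 2) ≤ K := fun s =>
    (Summable.sum_le_tsum s (fun i _ => Real.rpow_nonneg (Nat.cast_nonneg i) _) hsummable).trans
      (le_max_right _ _)
  set δ : ℝ := Real.sqrt (c / (2 * C ^ 2 * K)) with hδdef
  have hq : (0:ℝ) < c / (2 * C ^ 2 * K) := by positivity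
  have hδpos : 0 < δ := Real.sqrt_pos.mpr hq
  have hδsq : δ ^ 2 = c / (2 * C ^ 2 * K) := Real.sq_sqrt hq.le
  obtain ⟨T₀, hT₀⟩ := hcon δ hδpos
  set T : ℕ := max T₀ 1 with hTdef
  have hT1 : 1 ≤ T := le_max_right _ _
  have hT : ∀ τ : ℕ, T ≤ τ → Squarefree τ → ‖lam τ‖ < δ :=
    fun τ h h' => hT₀ τ (le_trans (le_max_left _ _) h) h'
  set M : ℕ := max T N₀ + 1 with hMdef
  have hM0 : N₀ ≤ M := le_trans (le_max_right _ _) (Nat.le_succ _)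
  have hM1 : (1:ℝ) ≤ (M:ℝ) := by
    have : 1 ≤ M := Nat.succ_le_succ (Nat.zero_le _)
    exact_mod_cast this
  set B : ℝ := C * M with hBdef
  have hB0 : (0:ℝ) < B := by
    have : (0:ℝ) < (M:ℝ) := lt_of_lt_of_le one_pos hM1
    positivity
  have hB : ∀ τ : ℕ, 1 ≤ τ → τ ≤ T → ‖lam τ‖ ^ 2 ≤ B := by
    intro τ hτ1 hτT
    have hmem : τ ∈ Icc 1 M :=
      mem_Icc.mpr ⟨hτ1, le_trans (le_trans hτT (le_max_left _ _)) (Nat.le_succ _)⟩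
    calc ‖lam τ‖ ^ 2 ≤ ∑ n ∈ Icc 1 M, ‖lam n‖ ^ 2 :=
          single_le_sum (f := fun n => ‖lam n‖ ^ 2)
            (fun i _ => by positivity) hmem
      _ ≤ C * M := (hN₀ M hM0).2
  -- main estimate
  have main : ∀ N : ℕ, N₀ ≤ N → 1 ≤ N →
      c * N ≤ C ^ 2 * B * T * (N : ℝ) ^ ((1:ℝ)/2 + ε) + c / 2 * N := by
    intro N hNN₀ hN1
    have hNpos : (0:ℝ) < (N:ℝ) := by exact_mod_cast hN1
    set g : ℕ × ℕ → ℝ := fun p => ‖lam (p.1 * p.2 ^ 2)‖ ^ 2 with hg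
    set S : Finset (ℕ × ℕ) :=
      (Icc 1 N ×ˢ Icc 1 N).filter (fun p => Squarefree p.1 ∧ p.1 * p.2 ^ 2 ≤ N) with hS
    -- membership facts for decompositions
    have hfacts : ∀ n ∈ Icc 1 N, sqfDec n ∈ S := by
      intro n hn
      obtain ⟨hn1, hnN⟩ := mem_Icc.mp hn
      have hmul := sqfDec_mul n
      have ha1 : 1 ≤ (sqfDec n).1 := by
        rcases Nat.eq_zero_or_pos (sqfDec n).1 with h | h
        · rw [h, mul_comm] at hmul; simp at hmul; omega
        · exact h
      have hb1 : 1 ≤ (sqfDec n).2 := by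
        rcases Nat.eq_zero_or_pos (sqfDec n).2 with h | h
        · rw [h] at hmul; simp at hmul; omega
        · exact h
      have haN : (sqfDec n).1 ≤ N := by
        have : (sqfDec n).1 ≤ (sqfDec n).1 * (sqfDec n).2 ^ 2 :=
          Nat.le_mul_of_pos_right _ (by positivity)
        omega
      have hbN : (sqfDec n).2 ≤ N := by
        have h2' : (sqfDec n).2 ≤ (sqfDec n).2 ^ 2 := Nat.le_self_pow two_ne_zero _
        have : (sqfDec n).2 ^ 2 ≤ (sqfDec n).1 * (sqfDec n).2 ^ 2 :=
          Nat.le_mul_of_pos_left _ ha1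
        omega
      refine mem_filter.mpr ⟨mem_product.mpr ⟨mem_Icc.mpr ⟨ha1, haN⟩, mem_Icc.mpr ⟨hb1, hbN⟩⟩,
        sqfDec_sqfree n, ?_⟩
      rw [hmul]; exact hnN
    have stepA : ∑ n ∈ Icc 1 N, ‖lam n‖ ^ 2 ≤ ∑ p ∈ S, g p := by
      have hinj : ∀ x ∈ Icc 1 N, ∀ y ∈ Icc 1 N, sqfDec x = sqfDec y → x = y := by
        intro x _ y _ hxy
        rw [← sqfDec_mul x, ← sqfDec_mul y, hxy]
      have himg : ∑ n ∈ Icc 1 N, ‖lam n‖ ^ 2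
          = ∑ p ∈ (Icc 1 N).image sqfDec, g p := by
        rw [sum_image hinj]
        exact sum_congr rfl fun n _ => by rw [hg]; simp only [sqfDec_mul]
      rw [himg]
      refine sum_le_sum_of_subset_of_nonneg ?_ (fun p _ _ => by positivity)
      intro p hp
      obtain ⟨n, hn, rfl⟩ := mem_image.mp hp
      exact hfacts n hn
    -- part with small squarefree part
    have hS1 : ∑ p ∈ S.filter (fun p => p.1 ≤ T), g p
        ≤ C ^ 2 * B * T * (N:ℝ) ^ ((1:ℝ)/2 + ε) := by
      have hsqrtN : (Nat.sqrt N : ℝ) ≤ (N:ℝ) ^ ((1:ℝ)/2) := by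
        rw [← Real.sqrt_eq_rpow]
        rw [Real.le_sqrt (Nat.cast_nonneg _) (Nat.cast_nonneg _)]
        exact_mod_cast Nat.sqrt_le' N
      have hbound : ∀ p ∈ S.filter (fun p => p.1 ≤ T), g p ≤ C ^ 2 * (N:ℝ) ^ ε * B := by
        intro p hp
        obtain ⟨hpS, hpT⟩ := mem_filter.mp hp
        obtain ⟨hprod, hsqf, hple⟩ := mem_filter.mp hpS
        obtain ⟨hp1, hp2⟩ := mem_product.mp hprod
        obtain ⟨h11, _⟩ := mem_Icc.mp hp1
        obtain ⟨h21, _⟩ := mem_Icc.mp hp2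
        have habs := h1 p.1 h11 hsqf p.2 h21
        have hξN : ((p.2:ℝ)) ^ ε ≤ ((N:ℝ) ^ ((1:ℝ)/2)) ^ ε := by
          apply Real.rpow_le_rpow (Nat.cast_nonneg _) _ hε0.le
          calc (p.2 : ℝ) ≤ (Nat.sqrt N : ℝ) := by
                exact_mod_cast Nat.le_sqrt'.mpr (le_trans (Nat.le_mul_of_pos_left _ h11) hple)
            _ ≤ (N:ℝ) ^ ((1:ℝ)/2) := hsqrtN
        have hlam : ‖lam p.1‖ ≤ Real.sqrt B := by
          rw [Real.le_sqrt (norm_nonneg _) hB0.le]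
          exact hB p.1 h11 hpT
        have hchain : ‖lam (p.1 * p.2 ^ 2)‖
            ≤ C * ((N:ℝ) ^ ((1:ℝ)/2)) ^ ε * Real.sqrt B := by
          calc ‖lam (p.1 * p.2 ^ 2)‖ ≤ C * (p.2:ℝ) ^ ε * ‖lam p.1‖ :=
                habs
            _ ≤ C * (p.2:ℝ) ^ ε * Real.sqrt B :=
                mul_le_mul_of_nonneg_left hlam
                  (mul_nonneg hC0.le (Real.rpow_nonneg (Nat.cast_nonneg _) _))
            _ ≤ C * ((N:ℝ) ^ ((1:ℝ)/2)) ^ ε * Real.sqrt B :=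
                mul_le_mul_of_nonneg_right (mul_le_mul_of_nonneg_left hξN hC0.le)
                  (Real.sqrt_nonneg _)
        have hsq : g p ≤ (C * ((N:ℝ) ^ ((1:ℝ)/2)) ^ ε * Real.sqrt B) ^ 2 :=
          pow_le_pow_left₀ (norm_nonneg _) hchain 2
        refine hsq.trans (le_of_eq ?_)
        have hNe : ((((N:ℝ) ^ ((1:ℝ)/2)) ^ ε) : ℝ) ^ (2:ℕ) = (N:ℝ) ^ ε := by
          rw [← Real.rpow_natCast (((N:ℝ) ^ ((1:ℝ)/2)) ^ ε) 2,
            ← Real.rpow_mul (Real.rpow_nonneg hNpos.le _), ← Real.rpow_mul hNpos.le]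
          congr 1
          push_cast
          ring
        rw [mul_pow, mul_pow, Real.sq_sqrt hB0.le, hNe]
      calc ∑ p ∈ S.filter (fun p => p.1 ≤ T), g p
          ≤ (S.filter (fun p => p.1 ≤ T)).card • (C ^ 2 * (N:ℝ) ^ ε * B) :=
            sum_le_card_nsmul _ _ _ hbound
        _ = ((S.filter (fun p => p.1 ≤ T)).card : ℝ) * (C ^ 2 * (N:ℝ) ^ ε * B) :=
            nsmul_eq_mul _ _
        _ ≤ ((T * Nat.sqrt N : ℕ) : ℝ) * (C ^ 2 * (N:ℝ) ^ ε * B) := by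
            have hX : (0:ℝ) ≤ C ^ 2 * (N:ℝ) ^ ε * B :=
              mul_nonneg (mul_nonneg (sq_nonneg C) (Real.rpow_nonneg hNpos.le _)) hB0.le
            refine mul_le_mul_of_nonneg_right ?_ hX
            have hsub1 : S.filter (fun p => p.1 ≤ T) ⊆ Icc 1 T ×ˢ Icc 1 (Nat.sqrt N) := by
              intro p hp
              obtain ⟨hpS, hpT⟩ := mem_filter.mp hp
              obtain ⟨hprod, _, hple⟩ := mem_filter.mp hpS
              obtain ⟨hp1, hp2⟩ := mem_product.mp hprod
              obtain ⟨h11, _⟩ := mem_Icc.mp hp1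
              obtain ⟨h21, _⟩ := mem_Icc.mp hp2
              refine mem_product.mpr ⟨mem_Icc.mpr ⟨h11, hpT⟩, mem_Icc.mpr ⟨h21, ?_⟩⟩
              exact Nat.le_sqrt'.mpr (le_trans (Nat.le_mul_of_pos_left _ h11) hple)
            have hcard : (S.filter (fun p => p.1 ≤ T)).card ≤ T * Nat.sqrt N := by
              calc (S.filter (fun p => p.1 ≤ T)).card
                  ≤ (Icc 1 T ×ˢ Icc 1 (Nat.sqrt N)).card := card_le_card hsub1
                _ = T * Nat.sqrt N := by
                    simp [card_product, Nat.card_Icc]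
            exact_mod_cast hcard
        _ ≤ ((T:ℝ) * (N:ℝ) ^ ((1:ℝ)/2)) * (C ^ 2 * (N:ℝ) ^ ε * B) := by
            have hX : (0:ℝ) ≤ C ^ 2 * (N:ℝ) ^ ε * B :=
              mul_nonneg (mul_nonneg (sq_nonneg C) (Real.rpow_nonneg hNpos.le _)) hB0.le
            refine mul_le_mul_of_nonneg_right ?_ hX
            push_cast
            exact mul_le_mul_of_nonneg_left hsqrtN (Nat.cast_nonneg _)
        _ = C ^ 2 * B * T * ((N:ℝ) ^ ((1:ℝ)/2) * (N:ℝ) ^ ε) := by ring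
        _ = C ^ 2 * B * T * (N:ℝ) ^ ((1:ℝ)/2 + ε) := by
            rw [← Real.rpow_add hNpos]
    -- part with large squarefree part
    have hS2 : ∑ p ∈ S.filter (fun p => ¬ p.1 ≤ T), g p ≤ c / 2 * N := by
      have hpt : ∀ p ∈ S.filter (fun p => ¬ p.1 ≤ T),
          g p ≤ C ^ 2 * δ ^ 2 * (p.2:ℝ) ^ (2*ε) := by
        intro p hp
        obtain ⟨hpS, hpT⟩ := mem_filter.mp hp
        obtain ⟨hprod, hsqf, _⟩ := mem_filter.mp hpS
        obtain ⟨hp1, hp2⟩ := mem_product.mp hprod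
        obtain ⟨h11, _⟩ := mem_Icc.mp hp1
        obtain ⟨h21, _⟩ := mem_Icc.mp hp2
        have hδτ : ‖lam p.1‖ ≤ δ := (hT p.1 (by omega) hsqf).le
        have hchain : ‖lam (p.1 * p.2 ^ 2)‖ ≤ C * (p.2:ℝ) ^ ε * δ := by
          calc ‖lam (p.1 * p.2 ^ 2)‖ ≤ C * (p.2:ℝ) ^ ε * ‖lam p.1‖ :=
                h1 p.1 h11 hsqf p.2 h21
            _ ≤ C * (p.2:ℝ) ^ ε * δ := by
                apply mul_le_mul_of_nonneg_left hδτ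
                positivity
        have hsq : g p ≤ (C * (p.2:ℝ) ^ ε * δ) ^ 2 :=
          pow_le_pow_left₀ (norm_nonneg _) hchain 2
        refine hsq.trans (le_of_eq ?_)
        have hppos : (0:ℝ) < (p.2:ℝ) := by exact_mod_cast h21
        have hξe : (((p.2:ℝ) ^ ε) : ℝ) ^ (2:ℕ) = (p.2:ℝ) ^ (2*ε) := by
          rw [← Real.rpow_natCast ((p.2:ℝ) ^ ε) 2, ← Real.rpow_mul hppos.le]
          congr 1
          push_cast
          ring
        rw [mul_pow, mul_pow, hξe]
        ring
      calc ∑ p ∈ S.filter (fun p => ¬ p.1 ≤ T), g p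
          ≤ ∑ p ∈ S.filter (fun p => ¬ p.1 ≤ T), C ^ 2 * δ ^ 2 * (p.2:ℝ) ^ (2*ε) :=
            sum_le_sum hpt
        _ = C ^ 2 * δ ^ 2 * ∑ p ∈ S.filter (fun p => ¬ p.1 ≤ T), (p.2:ℝ) ^ (2*ε) := by
            rw [mul_sum]
        _ ≤ C ^ 2 * δ ^ 2 * ((N:ℝ) * K) := by
            apply mul_le_mul_of_nonneg_left _ (by positivity)
            have hsub2 : S.filter (fun p => ¬ p.1 ≤ T)
                ⊆ (Icc 1 N ×ˢ Icc 1 N).filter (fun p => p.1 * p.2 ^ 2 ≤ N) := by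
              intro p hp
              obtain ⟨hpS, _⟩ := mem_filter.mp hp
              obtain ⟨hprod, _, hple⟩ := mem_filter.mp hpS
              exact mem_filter.mpr ⟨hprod, hple⟩
            calc ∑ p ∈ S.filter (fun p => ¬ p.1 ≤ T), (p.2:ℝ) ^ (2*ε)
                ≤ ∑ p ∈ (Icc 1 N ×ˢ Icc 1 N).filter (fun p => p.1 * p.2 ^ 2 ≤ N),
                    (p.2:ℝ) ^ (2*ε) :=
                  sum_le_sum_of_subset_of_nonneg hsub2
                    (fun p _ _ => Real.rpow_nonneg (Nat.cast_nonneg _) _)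
              _ ≤ (N:ℝ) * K := by
                  rw [sum_filter, sum_product_right]
                  have hinner : ∀ ξ ∈ Icc 1 N,
                      (∑ τ ∈ Icc 1 N, if τ * ξ ^ 2 ≤ N then ((ξ:ℝ)) ^ (2*ε) else 0)
                      ≤ (N:ℝ) * (ξ:ℝ) ^ (2*ε-2) := by
                    intro ξ hξ
                    have hξ1 : 1 ≤ ξ := (mem_Icc.mp hξ).1
                    have hξpos : (0:ℝ) < (ξ:ℝ) := by exact_mod_cast hξ1
                    rw [← sum_filter, sum_const, nsmul_eq_mul]
                    have hcard : ((Icc 1 N).filter (fun τ => τ * ξ ^ 2 ≤ N)).card ≤ N / ξ ^ 2 := by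
                      have hss : (Icc 1 N).filter (fun τ => τ * ξ ^ 2 ≤ N)
                          ⊆ Icc 1 (N / ξ ^ 2) := by
                        intro τ hτ
                        obtain ⟨hτI, hτle⟩ := mem_filter.mp hτ
                        obtain ⟨hτ1, _⟩ := mem_Icc.mp hτI
                        exact mem_Icc.mpr ⟨hτ1,
                          (Nat.le_div_iff_mul_le (by positivity)).mpr hτle⟩
                      calc ((Icc 1 N).filter (fun τ => τ * ξ ^ 2 ≤ N)).card
                          ≤ (Icc 1 (N / ξ ^ 2)).card := card_le_card hss
                        _ = N / ξ ^ 2 := by simp [Nat.card_Icc]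
                    have hrp : (0:ℝ) ≤ (ξ:ℝ) ^ (2*ε) := Real.rpow_nonneg hξpos.le _
                    calc (((Icc 1 N).filter (fun τ => τ * ξ ^ 2 ≤ N)).card : ℝ) * (ξ:ℝ) ^ (2*ε)
                        ≤ ((N / ξ ^ 2 : ℕ) : ℝ) * (ξ:ℝ) ^ (2*ε) :=
                          mul_le_mul_of_nonneg_right (by exact_mod_cast hcard) hrp
                      _ ≤ ((N:ℝ) / ((ξ:ℝ) ^ 2)) * (ξ:ℝ) ^ (2*ε) := by
                          refine mul_le_mul_of_nonneg_right ?_ hrp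
                          calc ((N / ξ ^ 2 : ℕ) : ℝ) ≤ (N:ℝ) / ((ξ ^ 2 : ℕ) : ℝ) :=
                                Nat.cast_div_le
                            _ = (N:ℝ) / ((ξ:ℝ) ^ 2) := by push_cast; ring
                      _ = (N:ℝ) * (ξ:ℝ) ^ (2*ε-2) := by
                          have h2 : ((ξ:ℝ)) ^ (2:ℕ) = (ξ:ℝ) ^ ((2:ℝ)) := by
                            rw [← Real.rpow_natCast (ξ:ℝ) 2]
                            norm_num
                          rw [Real.rpow_sub hξpos, ← h2]
                          ring
                  calc ∑ ξ ∈ Icc 1 N, (∑ τ ∈ Icc 1 N, if τ * ξ ^ 2 ≤ N then ((ξ:ℝ)) ^ (2*ε) else 0)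
                      ≤ ∑ ξ ∈ Icc 1 N, (N:ℝ) * (ξ:ℝ) ^ (2*ε-2) := sum_le_sum hinner
                    _ = (N:ℝ) * ∑ ξ ∈ Icc 1 N, (ξ:ℝ) ^ (2*ε-2) := by rw [mul_sum]
                    _ ≤ (N:ℝ) * K := by
                        apply mul_le_mul_of_nonneg_left (hKsum _) hNpos.le
        _ = c / 2 * N := by
            rw [hδsq]
            field_simp
    calc c * N ≤ ∑ n ∈ Icc 1 N, ‖lam n‖ ^ 2 := (hN₀ N hNN₀).1
      _ ≤ ∑ p ∈ S, g p := stepA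
      _ = ∑ p ∈ S.filter (fun p => p.1 ≤ T), g p
          + ∑ p ∈ S.filter (fun p => ¬ p.1 ≤ T), g p :=
          (sum_filter_add_sum_filter_not S _ g).symm
      _ ≤ C ^ 2 * B * T * (N:ℝ) ^ ((1:ℝ)/2 + ε) + c / 2 * N := add_le_add hS1 hS2
  -- derive the contradiction
  have hgrow : ∀ᶠ N : ℕ in atTop, (2 * C ^ 2 * B * T / c) < (N:ℝ) ^ ((1:ℝ)/2 - ε) := by
    have := (tendsto_rpow_atTop (by linarith : (0:ℝ) < 1/2 - ε)).comp
      (tendsto_natCast_atTop_atTop (R := ℝ))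
    exact this.eventually_gt_atTop _
  obtain ⟨N, hNbig, hNN₀, hN1⟩ :=
    (hgrow.and ((eventually_ge_atTop N₀).and (eventually_ge_atTop 1))).exists
  have hNpos : (0:ℝ) < (N:ℝ) := by exact_mod_cast hN1
  have h := main N hNN₀ hN1
  have hpow : (0:ℝ) < (N:ℝ) ^ ((1:ℝ)/2 + ε) := Real.rpow_pos_of_pos hNpos _
  have hNsplit : (N:ℝ) = (N:ℝ) ^ ((1:ℝ)/2 + ε) * (N:ℝ) ^ ((1:ℝ)/2 - ε) := by
    rw [← Real.rpow_add hNpos]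
    norm_num
  have h' : c / 2 * ((N:ℝ) ^ ((1:ℝ)/2 + ε) * (N:ℝ) ^ ((1:ℝ)/2 - ε))
      ≤ C ^ 2 * B * T * (N:ℝ) ^ ((1:ℝ)/2 + ε) := by
    rw [← hNsplit]; linarith
  have hkey : C ^ 2 * B * T * (N:ℝ) ^ ((1:ℝ)/2 + ε)
      < c / 2 * ((N:ℝ) ^ ((1:ℝ)/2 + ε) * (N:ℝ) ^ ((1:ℝ)/2 - ε)) := by
    have heq : C ^ 2 * B * (T:ℝ) = c / 2 * (2 * C ^ 2 * B * T / c) := by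
      field_simp
    calc C ^ 2 * B * (T:ℝ) * (N:ℝ) ^ ((1:ℝ)/2 + ε)
        = c / 2 * (2 * C ^ 2 * B * T / c) * (N:ℝ) ^ ((1:ℝ)/2 + ε) := by rw [heq]
      _ < c / 2 * ((N:ℝ) ^ ((1:ℝ)/2 - ε)) * (N:ℝ) ^ ((1:ℝ)/2 + ε) := by
          apply mul_lt_mul_of_pos_right _ hpow
          exact mul_lt_mul_of_pos_left hNbig (by linarith)
      _ = c / 2 * ((N:ℝ) ^ ((1:ℝ)/2 + ε) * (N:ℝ) ^ ((1:ℝ)/2 - ε)) := by ring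
  linarith
end
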